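/- arXiv:math/0009225 — 6 statements merged into one kernel-verified Lean document; each statement's English description precedes it below -/
import Mathlib

section
/- Let A, B, C, D : ℝ → ℝ³ be curves, each differentiable at t₀, such that the tetrahedron with vertices A(t₀), B(t₀), C(t₀), D(t₀) is nondegenerate, and such that the five distances dist(A(t),B(t)), dist(A(t),C(t)), dist(A(t),D(t)), dist(B(t),C(t)), dist(B(t),D(t)) are constant in t (only l_CD(t) := dist(C(t),D(t)) may vary). Let φ(t) denote the dihedral angle of the tetrahedron A(t)B(t)C(t)D(t) at the edge A(t)B(t). Then |φ'(t₀)| = (1/6)·l_AB·l_CD/V·|l_CD'(t₀)|, where l_AB = dist(A(t₀),B(t₀)), l_CD = dist(C(t₀),D(t₀)) and V is the volume of the tetrahedron at t₀. -/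
/-!
Let `x`, `y` be the components of `C - A`, `D - A` orthogonal to `B - A`, so that `φ` is the
angle between `x` and `y`. By polarization every inner product among `B - A`, `C - A`, `D - A`
is a function of the edge lengths, so when only `l_CD` varies, `‖x‖` and `‖y‖` stay constant and
`⟪x, y⟫ = const - l_CD² / 2`. Differentiating `φ = arccos (⟪x, y⟫ / (‖x‖ ‖y‖))` gives
`φ' = l_CD l_CD' / √(‖x‖² ‖y‖² - ⟪x, y⟫²)`, and the Gram identity
`det (b, c, d)² = ‖b‖² (‖x‖² ‖y‖² - ⟪x, y⟫²)` identifies the denominator with `6 V / l_AB`.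
-/

open InnerProductGeometry Real
open scoped RealInnerProductSpace

/-- The dihedral angle at the edge `PQ`, seen from points `X` and `Y`: the angle (valued in
`[0, π]`) between the components of `X - P` and `Y - P` orthogonal to `Q - P`. -/
noncomputable def dihedralAngle (P Q X Y : EuclideanSpace ℝ (Fin 3)) : ℝ :=
  let u : EuclideanSpace ℝ (Fin 3) := ‖Q - P‖⁻¹ • (Q - P)
  InnerProductGeometry.angle
    (X - P - (inner ℝ (X - P) u : ℝ) • u)
    (Y - P - (inner ℝ (Y - P) u : ℝ) • u)

/-- The (unsigned) volume of the tetrahedron with vertices `A B C D`: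
`|det(B - A, C - A, D - A)| / 6`. -/
noncomputable def tetVol (A B C D : EuclideanSpace ℝ (Fin 3)) : ℝ :=
  |(Matrix.of fun i j : Fin 3 => (![B - A, C - A, D - A] j) i).det| / 6

section InnerProductSpace

variable {E : Type*} [NormedAddCommGroup E] [InnerProductSpace ℝ E]

/-- Since `‖0‖⁻¹ = 0`, `orthComponent 0 v = v`. -/
noncomputable def orthComponent (b v : E) : E :=
  v - ⟪v, ‖b‖⁻¹ • b⟫ • (‖b‖⁻¹ • b)

theorem inner_orthComponent (b v w : E) :
    ⟪orthComponent b v, orthComponent b w⟫ = ⟪v, w⟫ - ⟪b, v⟫ * ⟪b, w⟫ / ‖b‖ ^ 2 := by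
  rcases eq_or_ne b 0 with rfl | hb
  · simp [orthComponent]
  have hb' : ‖b‖ ≠ 0 := norm_ne_zero_iff.mpr hb
  simp only [orthComponent, inner_sub_left, inner_sub_right, real_inner_smul_left,
    real_inner_smul_right, real_inner_comm v b, real_inner_comm w b, real_inner_self_eq_norm_sq]
  field_simp
  ring

theorem inner_sub_sub_eq_dist (A B C : E) :
    ⟪B - A, C - A⟫ = (dist A B ^ 2 + dist A C ^ 2 - dist B C ^ 2) / 2 := by
  rw [real_inner_eq_norm_mul_self_add_norm_mul_self_sub_norm_sub_mul_self_div_two,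
    sub_sub_sub_cancel_right, ← dist_eq_norm, ← dist_eq_norm, ← dist_eq_norm,
    dist_comm B A, dist_comm C A]
  ring

theorem inner_orthComponent_sub_eq_dist (A B C D : E) :
    ⟪orthComponent (B - A) (C - A), orthComponent (B - A) (D - A)⟫ =
      (dist A C ^ 2 + dist A D ^ 2 - dist C D ^ 2) / 2 -
        (dist A B ^ 2 + dist A C ^ 2 - dist B C ^ 2) / 2 *
          ((dist A B ^ 2 + dist A D ^ 2 - dist B D ^ 2) / 2) / dist A B ^ 2 := by
  rw [inner_orthComponent, inner_sub_sub_eq_dist, inner_sub_sub_eq_dist, inner_sub_sub_eq_dist,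
    ← dist_eq_norm']

theorem hasDerivAt_angle_of_norm_eq {x y : ℝ → E} {t₀ h' : ℝ}
    (hx : ∀ t, ‖x t‖ = ‖x t₀‖) (hy : ∀ t, ‖y t‖ = ‖y t₀‖)
    (hinner : HasDerivAt (fun t => ⟪x t, y t⟫) h' t₀)
    (hlt : |⟪x t₀, y t₀⟫| < ‖x t₀‖ * ‖y t₀‖) :
    HasDerivAt (fun t => angle (x t) (y t))
      (-h' / √((‖x t₀‖ * ‖y t₀‖) ^ 2 - ⟪x t₀, y t₀⟫ ^ 2)) t₀ := by
  set N := ‖x t₀‖ * ‖y t₀‖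
  have hN : 0 < N := (abs_nonneg _).trans_lt hlt
  have hcos : |⟪x t₀, y t₀⟫ / N| < 1 := by
    rwa [abs_div, abs_of_pos hN, div_lt_one hN]
  have hfun : (fun t => angle (x t) (y t)) = fun t => arccos (⟪x t, y t⟫ / N) := by
    funext t
    rw [angle, hx, hy]
  rw [hfun]
  have harccos := (hasDerivAt_arccos (abs_lt.mp hcos).1.ne' (abs_lt.mp hcos).2.ne).comp t₀
    (hinner.div_const N)
  refine harccos.congr_deriv ?_
  have hsq : N ^ 2 - ⟪x t₀, y t₀⟫ ^ 2 = N ^ 2 * (1 - (⟪x t₀, y t₀⟫ / N) ^ 2) := by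
    field_simp
  rw [hsq, sqrt_mul (sq_nonneg N), sqrt_sq hN.le]
  field_simp

end InnerProductSpace

theorem det_sq_eq_gram (b c d : EuclideanSpace ℝ (Fin 3)) :
    (Matrix.of fun i j : Fin 3 => (![b, c, d] j) i).det ^ 2 =
      ⟪b, b⟫ * (⟪c, c⟫ * ⟪d, d⟫ - ⟪c, d⟫ ^ 2) - ⟪b, c⟫ * (⟪b, c⟫ * ⟪d, d⟫ - ⟪c, d⟫ * ⟪b, d⟫)
        + ⟪b, d⟫ * (⟪b, c⟫ * ⟪c, d⟫ - ⟪c, c⟫ * ⟪b, d⟫) := by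
  simp only [Matrix.det_fin_three, Matrix.of_apply, Matrix.cons_val_zero, Matrix.cons_val_one,
    Matrix.cons_val, PiLp.inner_apply, RCLike.inner_apply, conj_trivial, Fin.sum_univ_three]
  ring

theorem det_sq_eq_norm_sq_mul_orthComponent (b c d : EuclideanSpace ℝ (Fin 3)) :
    (Matrix.of fun i j : Fin 3 => (![b, c, d] j) i).det ^ 2 =
      ‖b‖ ^ 2 * ((‖orthComponent b c‖ * ‖orthComponent b d‖) ^ 2 -
        ⟪orthComponent b c, orthComponent b d⟫ ^ 2) := by
  rcases eq_or_ne b 0 with rfl | hb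
  · simp [Matrix.det_fin_three]
  have hb' : ‖b‖ ≠ 0 := norm_ne_zero_iff.mpr hb
  rw [mul_pow, ← real_inner_self_eq_norm_sq (orthComponent b c),
    ← real_inner_self_eq_norm_sq (orthComponent b d), inner_orthComponent, inner_orthComponent,
    inner_orthComponent, det_sq_eq_gram, real_inner_self_eq_norm_sq b]
  field_simp
  ring

theorem abs_det_eq_norm_mul_sqrt (b c d : EuclideanSpace ℝ (Fin 3)) :
    |(Matrix.of fun i j : Fin 3 => (![b, c, d] j) i).det| =
      ‖b‖ * √((‖orthComponent b c‖ * ‖orthComponent b d‖) ^ 2 -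
        ⟪orthComponent b c, orthComponent b d⟫ ^ 2) := by
  rw [← sqrt_sq_eq_abs, det_sq_eq_norm_sq_mul_orthComponent, sqrt_mul (sq_nonneg _),
    sqrt_sq (norm_nonneg _)]

/-- The square root is `h_C h_D sin φ`, with `h_C`, `h_D` the distances of `C`, `D` from the line
`AB`: the classical `V = l_AB h_C h_D sin φ / 6`. -/
theorem tetVol_eq_dist_mul_sqrt (A B C D : EuclideanSpace ℝ (Fin 3)) :
    tetVol A B C D = dist A B *
      √((‖orthComponent (B - A) (C - A)‖ * ‖orthComponent (B - A) (D - A)‖) ^ 2 -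
        ⟪orthComponent (B - A) (C - A), orthComponent (B - A) (D - A)⟫ ^ 2) / 6 := by
  rw [tetVol, abs_det_eq_norm_mul_sqrt, dist_eq_norm']

theorem dihedralAngle_eq_angle (P Q X Y : EuclideanSpace ℝ (Fin 3)) :
    dihedralAngle P Q X Y = angle (orthComponent (Q - P) (X - P)) (orthComponent (Q - P) (Y - P)) :=
  rfl

theorem abs_deriv_dihedralAngle_eq_general (A B C D : ℝ → EuclideanSpace ℝ (Fin 3)) (t₀ : ℝ)
    (hC : DifferentiableAt ℝ C t₀) (hD : DifferentiableAt ℝ D t₀)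
    (hV : tetVol (A t₀) (B t₀) (C t₀) (D t₀) ≠ 0)
    (hAB : ∀ t, dist (A t) (B t) = dist (A t₀) (B t₀))
    (hAC : ∀ t, dist (A t) (C t) = dist (A t₀) (C t₀))
    (hAD : ∀ t, dist (A t) (D t) = dist (A t₀) (D t₀))
    (hBC : ∀ t, dist (B t) (C t) = dist (B t₀) (C t₀))
    (hBD : ∀ t, dist (B t) (D t) = dist (B t₀) (D t₀)) :
    |deriv (fun t => dihedralAngle (A t) (B t) (C t) (D t)) t₀| =
      1 / 6 * dist (A t₀) (B t₀) * dist (C t₀) (D t₀) /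
          tetVol (A t₀) (B t₀) (C t₀) (D t₀) *
        |deriv (fun t => dist (C t) (D t)) t₀| := by
  set x := fun t => orthComponent (B t - A t) (C t - A t)
  set y := fun t => orthComponent (B t - A t) (D t - A t)
  set l := fun t => dist (C t) (D t)
  have hinner : ∀ t, ⟪x t, y t⟫ = ⟪x t₀, y t₀⟫ + (l t₀ ^ 2 - l t ^ 2) / 2 := fun t => by
    simp only [x, y, l, inner_orthComponent_sub_eq_dist, hAB t, hAC t, hAD t, hBC t, hBD t]
    ring
  have hx : ∀ t, ‖x t‖ = ‖x t₀‖ := fun t => by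
    rw [← pow_left_inj₀ (norm_nonneg _) (norm_nonneg _) two_ne_zero]
    simp only [x, ← real_inner_self_eq_norm_sq, inner_orthComponent_sub_eq_dist, hAB t, hAC t,
      hBC t, dist_self]
  have hy : ∀ t, ‖y t‖ = ‖y t₀‖ := fun t => by
    rw [← pow_left_inj₀ (norm_nonneg _) (norm_nonneg _) two_ne_zero]
    simp only [y, ← real_inner_self_eq_norm_sq, inner_orthComponent_sub_eq_dist, hAB t, hAD t,
      hBD t, dist_self]
  set G := (‖x t₀‖ * ‖y t₀‖) ^ 2 - ⟪x t₀, y t₀⟫ ^ 2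
  have hvol : tetVol (A t₀) (B t₀) (C t₀) (D t₀) = dist (A t₀) (B t₀) * √G / 6 :=
    tetVol_eq_dist_mul_sqrt _ _ _ _
  rw [hvol] at hV ⊢
  have hAB0 : dist (A t₀) (B t₀) ≠ 0 := by contrapose! hV; simp [hV]
  have hG : 0 < G := by
    contrapose! hV
    simp [sqrt_eq_zero'.mpr hV]
  have hCD : C t₀ ≠ D t₀ := by
    intro h
    simp [G, x, y, h, sq] at hG
  have hl : HasDerivAt l (deriv l t₀) t₀ := (hC.dist ℝ hD hCD).hasDerivAt
  have hinner_deriv : HasDerivAt (fun t => ⟪x t, y t⟫) (-(l t₀ * deriv l t₀)) t₀ :=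
    (((((hl.pow 2).const_sub _).div_const 2).const_add _).congr_of_eventuallyEq
      (.of_forall hinner)).congr_deriv (by push_cast; ring)
  have hφ := hasDerivAt_angle_of_norm_eq hx hy hinner_deriv
    (abs_lt_of_sq_lt_sq (by linarith) (by positivity))
  simp only [dihedralAngle_eq_angle]
  rw [hφ.deriv, neg_neg, abs_div, abs_mul, abs_of_nonneg dist_nonneg,
    abs_of_pos (sqrt_pos.mpr hG)]
  field_simp

/-- If all edge lengths of a differentiably moving tetrahedron `A(t)B(t)C(t)D(t)` are fixed
except `l_CD`, then the dihedral angle `φ` at the edge `AB` satisfies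
`|φ'(t₀)| = (1/6) · l_AB · l_CD / V · |l_CD'(t₀)|`. -/
theorem abs_deriv_dihedralAngle_eq (A B C D : ℝ → EuclideanSpace ℝ (Fin 3)) (t₀ : ℝ)
    (hA : DifferentiableAt ℝ A t₀) (hB : DifferentiableAt ℝ B t₀)
    (hC : DifferentiableAt ℝ C t₀) (hD : DifferentiableAt ℝ D t₀)
    (hV : tetVol (A t₀) (B t₀) (C t₀) (D t₀) ≠ 0)
    (hAB : ∀ t, dist (A t) (B t) = dist (A t₀) (B t₀))
    (hAC : ∀ t, dist (A t) (C t) = dist (A t₀) (C t₀))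
    (hAD : ∀ t, dist (A t) (D t) = dist (A t₀) (D t₀))
    (hBC : ∀ t, dist (B t) (C t) = dist (B t₀) (C t₀))
    (hBD : ∀ t, dist (B t) (D t) = dist (B t₀) (D t₀)) :
    |deriv (fun t => dihedralAngle (A t) (B t) (C t) (D t)) t₀| =
      1 / 6 * dist (A t₀) (B t₀) * dist (C t₀) (D t₀) /
          tetVol (A t₀) (B t₀) (C t₀) (D t₀) *
        |deriv (fun t => dist (C t) (D t)) t₀| :=
  abs_deriv_dihedralAngle_eq_general A B C D t₀ hC hD hV hAB hAC hAD hBC hBD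
end

section
/- Let A, B, C, D, E : ℝ → ℝ³ be curves, each differentiable at t₀, such that the four tetrahedra with vertex quadruples (B,C,D,E), (A,C,D,E), (A,B,C,E), (A,B,C,D) are all nondegenerate at t₀, and such that all ten pairwise distances among the five points are constant in t except possibly l_AB(t) := dist(A(t),B(t)) and l_DE(t) := dist(D(t),E(t)). Then |l_AB · l_AB'(t₀) · V_{BCDE} · V_{ACDE}| = |l_DE · l_DE'(t₀) · V_{ABCE} · V_{ABCD}|, where all lengths and volumes are evaluated at t₀. -/
open scoped RealInnerProductSpace

section InnerProductSpace

variable {E : Type*} [NormedAddCommGroup E] [InnerProductSpace ℝ E]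

theorem norm_mul_deriv_norm {f : ℝ → E} {t : ℝ} (hf : DifferentiableAt ℝ f t) :
    ‖f t‖ * deriv (fun s => ‖f s‖) t = ⟪f t, deriv f t⟫ := by
  by_cases h0 : f t = 0
  · simp [h0] -- both sides vanish, whatever junk value `deriv` takes where `‖f ·‖` is not smooth
  have hsq := ((hf.norm ℝ h0).hasDerivAt.pow 2).unique hf.hasDerivAt.norm_sq
  norm_num at hsq
  linarith

theorem dist_mul_deriv_dist {f g : ℝ → E} {t : ℝ} (hf : DifferentiableAt ℝ f t)
    (hg : DifferentiableAt ℝ g t) :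
    dist (f t) (g t) * deriv (fun s => dist (f s) (g s)) t
      = ⟪f t - g t, deriv f t - deriv g t⟫ := by
  simp only [dist_eq_norm]
  rw [norm_mul_deriv_norm (f := fun s => f s - g s) (hf.sub hg), deriv_fun_sub hf hg]

theorem inner_sub_deriv_sub_eq_zero_of_dist_const {f g : ℝ → E} {t : ℝ}
    (hf : DifferentiableAt ℝ f t) (hg : DifferentiableAt ℝ g t)
    (hc : ∀ s, dist (f s) (g s) = dist (f t) (g t)) :
    ⟪f t - g t, deriv f t - deriv g t⟫ = 0 := by
  rw [← dist_mul_deriv_dist hf hg, funext hc, deriv_const, mul_zero]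

theorem inner_sub_sub_swap (x y u v : E) : ⟪y - x, v - u⟫ = ⟪x - y, u - v⟫ := by
  rw [← neg_sub x, ← neg_sub u, inner_neg_neg]

theorem sum_sum_mul_inner_sub_sub_eq_zero {ι : Type*} [Fintype ι] (P p : ι → E) (ω : ι → ℝ)
    (hω : ∑ i, ω i = 0) (hωP : ∑ i, ω i • P i = 0) :
    ∑ i, ∑ j, ω i * ω j * ⟪P i - P j, p i - p j⟫ = 0 := by
  have equilibrium : ∀ i, ∑ j, ω j • (P i - P j) = 0 := fun i => by
    simp only [smul_sub, Finset.sum_sub_distrib, ← Finset.sum_smul, hω, hωP, zero_smul, sub_zero]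
  have half : ∀ i, ∑ j, ω i * ω j * ⟪P i - P j, p i⟫ = 0 := fun i => by
    simp_rw [mul_assoc, ← Finset.mul_sum, ← real_inner_smul_left, ← sum_inner, equilibrium,
      inner_zero_left, mul_zero]
  calc ∑ i, ∑ j, ω i * ω j * ⟪P i - P j, p i - p j⟫
      = ∑ i, ∑ j, (ω i * ω j * ⟪P i - P j, p i⟫ + ω j * ω i * ⟪P j - P i, p j⟫) := by
        congr! 2 with i - j
        rw [inner_sub_right, ← neg_sub (P i), inner_neg_left]
        ring
    _ = 0 := by
        simp only [Finset.sum_add_distrib]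
        rw [Finset.sum_comm (f := fun i j => ω j * ω i * ⟪P j - P i, p j⟫)]
        simp [half]

end InnerProductSpace

section Tetrahedra

noncomputable def tetDet (A B C D : EuclideanSpace ℝ (Fin 3)) : ℝ :=
  (Matrix.of fun i j : Fin 3 => (![B - A, C - A, D - A] j) i).det

theorem tetVol_eq_abs_tetDet (A B C D : EuclideanSpace ℝ (Fin 3)) :
    tetVol A B C D = |tetDet A B C D| / 6 := rfl

theorem tetDet_eq (A B C D : EuclideanSpace ℝ (Fin 3)) : tetDet A B C D =
    (B 0 - A 0) * ((C 1 - A 1) * (D 2 - A 2) - (C 2 - A 2) * (D 1 - A 1))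
      - (C 0 - A 0) * ((B 1 - A 1) * (D 2 - A 2) - (B 2 - A 2) * (D 1 - A 1))
      + (D 0 - A 0) * ((B 1 - A 1) * (C 2 - A 2) - (B 2 - A 2) * (C 1 - A 1)) := by
  rw [tetDet, Matrix.det_fin_three]
  simp only [Matrix.of_apply, Matrix.cons_val, PiLp.sub_apply]
  ring

theorem tetDet_alternating_sum (A B C D E : EuclideanSpace ℝ (Fin 3)) :
    tetDet B C D E - tetDet A C D E + tetDet A B D E - tetDet A B C E + tetDet A B C D = 0 := by
  simp only [tetDet_eq]
  ring

theorem tetDet_alternating_sum_smul (A B C D E : EuclideanSpace ℝ (Fin 3)) :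
    tetDet B C D E • A - tetDet A C D E • B + tetDet A B D E • C - tetDet A B C E • D
      + tetDet A B C D • E = 0 := by
  ext i
  simp only [tetDet_eq, PiLp.add_apply, PiLp.sub_apply, PiLp.smul_apply, smul_eq_mul,
    PiLp.zero_apply]
  fin_cases i <;> simp only [Fin.zero_eta, Fin.mk_one, Fin.reduceFinMk] <;> ring

theorem tetDet_mul_tetDet_mul_inner_eq_neg (A B C D E a b c d e : EuclideanSpace ℝ (Fin 3))
    (hAC : ⟪A - C, a - c⟫ = 0) (hAD : ⟪A - D, a - d⟫ = 0) (hAE : ⟪A - E, a - e⟫ = 0)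
    (hBC : ⟪B - C, b - c⟫ = 0) (hBD : ⟪B - D, b - d⟫ = 0) (hBE : ⟪B - E, b - e⟫ = 0)
    (hCD : ⟪C - D, c - d⟫ = 0) (hCE : ⟪C - E, c - e⟫ = 0) :
    tetDet B C D E * tetDet A C D E * ⟪A - B, a - b⟫
      = -(tetDet A B C E * tetDet A B C D * ⟪D - E, d - e⟫) := by
  have h := sum_sum_mul_inner_sub_sub_eq_zero ![A, B, C, D, E] ![a, b, c, d, e]
    ![tetDet B C D E, -tetDet A C D E, tetDet A B D E, -tetDet A B C E, tetDet A B C D]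
    (by simpa [Fin.sum_univ_five, ← sub_eq_add_neg] using tetDet_alternating_sum A B C D E)
    (by simpa [Fin.sum_univ_five, ← sub_eq_add_neg] using tetDet_alternating_sum_smul A B C D E)
  simp only [Fin.sum_univ_five, Matrix.cons_val_zero, Matrix.cons_val_one, Matrix.cons_val,
    sub_self, inner_zero_left, mul_zero, zero_add, add_zero, neg_mul, mul_neg, neg_zero,
    inner_sub_sub_swap A B, inner_sub_sub_swap A C, inner_sub_sub_swap A D,
    inner_sub_sub_swap A E, inner_sub_sub_swap B C, inner_sub_sub_swap B D, inner_sub_sub_swap B E,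
    inner_sub_sub_swap C D, inner_sub_sub_swap C E, inner_sub_sub_swap D E, hAC, hAD, hAE, hBC, hBD,
    hBE, hCD, hCE] at h
  linear_combination -h / 2

end Tetrahedra

theorem length_derivative_balance_general (A B C D E : ℝ → EuclideanSpace ℝ (Fin 3)) (t₀ : ℝ)
    (hA : DifferentiableAt ℝ A t₀) (hB : DifferentiableAt ℝ B t₀)
    (hC : DifferentiableAt ℝ C t₀) (hD : DifferentiableAt ℝ D t₀)
    (hE : DifferentiableAt ℝ E t₀)
    (hAC : ∀ t, dist (A t) (C t) = dist (A t₀) (C t₀))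
    (hAD : ∀ t, dist (A t) (D t) = dist (A t₀) (D t₀))
    (hAE : ∀ t, dist (A t) (E t) = dist (A t₀) (E t₀))
    (hBC : ∀ t, dist (B t) (C t) = dist (B t₀) (C t₀))
    (hBD : ∀ t, dist (B t) (D t) = dist (B t₀) (D t₀))
    (hBE : ∀ t, dist (B t) (E t) = dist (B t₀) (E t₀))
    (hCD : ∀ t, dist (C t) (D t) = dist (C t₀) (D t₀))
    (hCE : ∀ t, dist (C t) (E t) = dist (C t₀) (E t₀)) :
    |dist (A t₀) (B t₀) * deriv (fun t => dist (A t) (B t)) t₀ *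
        tetVol (B t₀) (C t₀) (D t₀) (E t₀) * tetVol (A t₀) (C t₀) (D t₀) (E t₀)| =
      |dist (D t₀) (E t₀) * deriv (fun t => dist (D t) (E t)) t₀ *
        tetVol (A t₀) (B t₀) (C t₀) (E t₀) * tetVol (A t₀) (B t₀) (C t₀) (D t₀)| := by
  have balance := congrArg abs <| tetDet_mul_tetDet_mul_inner_eq_neg (A t₀) (B t₀) (C t₀) (D t₀)
    (E t₀) (deriv A t₀) (deriv B t₀) (deriv C t₀) (deriv D t₀) (deriv E t₀)
    (inner_sub_deriv_sub_eq_zero_of_dist_const hA hC hAC)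
    (inner_sub_deriv_sub_eq_zero_of_dist_const hA hD hAD)
    (inner_sub_deriv_sub_eq_zero_of_dist_const hA hE hAE)
    (inner_sub_deriv_sub_eq_zero_of_dist_const hB hC hBC)
    (inner_sub_deriv_sub_eq_zero_of_dist_const hB hD hBD)
    (inner_sub_deriv_sub_eq_zero_of_dist_const hB hE hBE)
    (inner_sub_deriv_sub_eq_zero_of_dist_const hC hD hCD)
    (inner_sub_deriv_sub_eq_zero_of_dist_const hC hE hCE)
  rw [abs_neg] at balance
  simp only [dist_mul_deriv_dist hA hB, dist_mul_deriv_dist hD hE, tetVol_eq_abs_tetDet, abs_mul,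
    abs_div, abs_abs, Nat.abs_ofNat] at balance ⊢
  linear_combination balance / 36

/-- For five differentiably moving points `A, B, C, D, E` in `ℝ³` whose ten pairwise distances
are all constant except possibly `l_AB` and `l_DE`, and whose four tetrahedra `BCDE`, `ACDE`,
`ABCE`, `ABCD` are nondegenerate at `t₀`, one has
`|l_AB · l_AB' · V_{BCDE} · V_{ACDE}| = |l_DE · l_DE' · V_{ABCE} · V_{ABCD}|` at `t₀`. -/
theorem length_derivative_balance (A B C D E : ℝ → EuclideanSpace ℝ (Fin 3)) (t₀ : ℝ)
    (hA : DifferentiableAt ℝ A t₀) (hB : DifferentiableAt ℝ B t₀)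
    (hC : DifferentiableAt ℝ C t₀) (hD : DifferentiableAt ℝ D t₀)
    (hE : DifferentiableAt ℝ E t₀)
    (hV1 : tetVol (B t₀) (C t₀) (D t₀) (E t₀) ≠ 0)
    (hV2 : tetVol (A t₀) (C t₀) (D t₀) (E t₀) ≠ 0)
    (hV3 : tetVol (A t₀) (B t₀) (C t₀) (E t₀) ≠ 0)
    (hV4 : tetVol (A t₀) (B t₀) (C t₀) (D t₀) ≠ 0)
    (hAC : ∀ t, dist (A t) (C t) = dist (A t₀) (C t₀))
    (hAD : ∀ t, dist (A t) (D t) = dist (A t₀) (D t₀))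
    (hAE : ∀ t, dist (A t) (E t) = dist (A t₀) (E t₀))
    (hBC : ∀ t, dist (B t) (C t) = dist (B t₀) (C t₀))
    (hBD : ∀ t, dist (B t) (D t) = dist (B t₀) (D t₀))
    (hBE : ∀ t, dist (B t) (E t) = dist (B t₀) (E t₀))
    (hCD : ∀ t, dist (C t) (D t) = dist (C t₀) (D t₀))
    (hCE : ∀ t, dist (C t) (E t) = dist (C t₀) (E t₀)) :
    |dist (A t₀) (B t₀) * deriv (fun t => dist (A t) (B t)) t₀ *
        tetVol (B t₀) (C t₀) (D t₀) (E t₀) * tetVol (A t₀) (C t₀) (D t₀) (E t₀)| =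
      |dist (D t₀) (E t₀) * deriv (fun t => dist (D t) (E t)) t₀ *
        tetVol (A t₀) (B t₀) (C t₀) (E t₀) * tetVol (A t₀) (B t₀) (C t₀) (D t₀)| :=
  length_derivative_balance_general A B C D E t₀ hA hB hC hD hE hAC hAD hAE hBC hBD hBE hCD hCE
end

section
/- Let A, B, C, D, E ∈ ℝ³ with A, B, C affinely independent, D ≠ E, none of A, B, C lying on the line through D and E, and suppose the open segment from D to E meets the interior of the triangle ABC; that is, there exist t ∈ (0,1) and λ₁, λ₂, λ₃ > 0 with λ₁ + λ₂ + λ₃ = 1 such that (1 − t)·D + t·E = λ₁·A + λ₂·B + λ₃·C. Then the three dihedral angles at the edge DE satisfy ∠(B, DE, C) + ∠(C, DE, A) + ∠(A, DE, B) = 2π. -/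
open InnerProductGeometry Real
open scoped RealInnerProductSpace

section

variable {V : Type*} [NormedAddCommGroup V] [InnerProductSpace ℝ V]

namespace InnerProductGeometry

theorem angle_add_angle_add_angle_eq_two_pi_of_add_add_eq_zero {x y z : V} (hy : y ≠ 0)
    (h : x + y + z = 0) : angle y z + angle z x + angle x y = 2 * π := by
  have hz : z = -(x + y) := eq_neg_of_add_eq_zero_right h
  have hxy : x - -y = -z := by rw [hz]; abel
  have hyx : -y - x = z := by rw [hz]; abel
  have htriangle := angle_add_angle_sub_add_angle_sub_eq_pi x (neg_ne_zero.2 hy)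
  rw [hxy, hyx, angle_neg_right, angle_neg_right, angle_neg_left, angle_comm x z] at htriangle
  linarith

theorem angle_add_angle_add_angle_eq_two_pi_of_smul_add_smul_add_smul_eq_zero {x y z : V}
    (hy : y ≠ 0) {a b c : ℝ} (ha : 0 < a) (hb : 0 < b) (hc : 0 < c)
    (h : a • x + b • y + c • z = 0) : angle y z + angle z x + angle x y = 2 * π := by
  have := angle_add_angle_add_angle_eq_two_pi_of_add_add_eq_zero (smul_ne_zero hb.ne' hy) h
  simpa only [angle_smul_left_of_pos _ _ ha, angle_smul_left_of_pos _ _ hb,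
    angle_smul_left_of_pos _ _ hc, angle_smul_right_of_pos _ _ ha,
    angle_smul_right_of_pos _ _ hb, angle_smul_right_of_pos _ _ hc] using this

end InnerProductGeometry

theorem starProjection_orthogonal_singleton_apply (w x : V) :
    (ℝ ∙ w)ᗮ.starProjection x = x - ⟪x, ‖w‖⁻¹ • w⟫ • (‖w‖⁻¹ • w) := by
  rw [Submodule.starProjection_orthogonal_val, Submodule.starProjection_singleton,
    real_inner_smul_right, smul_smul, real_inner_comm]
  congr 2
  simp only [RCLike.ofReal_real_eq_id, id]
  field_simp

theorem starProjection_orthogonal_sub_ne_zero_of_notMem_affineSpan_pair {P Q X : V}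
    (hX : X ∉ affineSpan ℝ ({P, Q} : Set V)) :
    (ℝ ∙ (Q - P))ᗮ.starProjection (X - P) ≠ 0 := by
  rwa [ne_eq, Submodule.starProjection_apply_eq_zero_iff, Submodule.orthogonal_orthogonal,
    ← vsub_eq_sub, ← vsub_eq_sub, ← vectorSpan_pair_rev, ← direction_affineSpan,
    AffineSubspace.vsub_right_mem_direction_iff_mem (left_mem_affineSpan_pair ℝ P Q)]

end

theorem dihedralAngle_eq_angle_starProjection (P Q X Y : EuclideanSpace ℝ (Fin 3)) :
    dihedralAngle P Q X Y = angle ((ℝ ∙ (Q - P))ᗮ.starProjection (X - P))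
      ((ℝ ∙ (Q - P))ᗮ.starProjection (Y - P)) := by
  simp only [dihedralAngle, starProjection_orthogonal_singleton_apply]

theorem dihedralAngle_sum_around_edge_general (A B C D E : EuclideanSpace ℝ (Fin 3))
    (hB : B ∉ affineSpan ℝ ({D, E} : Set (EuclideanSpace ℝ (Fin 3))))
    (hseg : ∃ t ∈ Set.Ioo (0 : ℝ) 1, ∃ l₁ l₂ l₃ : ℝ,
      0 < l₁ ∧ 0 < l₂ ∧ 0 < l₃ ∧ l₁ + l₂ + l₃ = 1 ∧
        (1 - t) • D + t • E = l₁ • A + l₂ • B + l₃ • C) :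
    dihedralAngle D E B C + dihedralAngle D E C A + dihedralAngle D E A B = 2 * Real.pi := by
  obtain ⟨t, -, l₁, l₂, l₃, h₁, h₂, h₃, hsum, hmeet⟩ := hseg
  set p := (ℝ ∙ (E - D))ᗮ.starProjection
  have hcomb : l₁ • (A - D) + l₂ • (B - D) + l₃ • (C - D) = t • (E - D) := by
    linear_combination (norm := module) -hmeet - hsum • D
  have hproj : l₁ • p (A - D) + l₂ • p (B - D) + l₃ • p (C - D) = 0 := by
    simp only [← map_smul, ← map_add, hcomb, p, Submodule.starProjection_apply_eq_zero_iff,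
      Submodule.orthogonal_orthogonal]
    exact Submodule.smul_mem _ _ (Submodule.mem_span_singleton_self _)
  simp only [dihedralAngle_eq_angle_starProjection]
  exact angle_add_angle_add_angle_eq_two_pi_of_smul_add_smul_add_smul_eq_zero
    (starProjection_orthogonal_sub_ne_zero_of_notMem_affineSpan_pair hB)
    h₁ h₂ h₃ hproj

/-- If the open segment `DE` passes through the interior of the triangle `ABC`, then the three
dihedral angles at the edge `DE` sum to `2π`:
`∠(B, DE, C) + ∠(C, DE, A) + ∠(A, DE, B) = 2π`. -/
theorem dihedralAngle_sum_around_edge (A B C D E : EuclideanSpace ℝ (Fin 3))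
    (hABC : AffineIndependent ℝ ![A, B, C]) (hDE : D ≠ E)
    (hA : A ∉ affineSpan ℝ ({D, E} : Set (EuclideanSpace ℝ (Fin 3))))
    (hB : B ∉ affineSpan ℝ ({D, E} : Set (EuclideanSpace ℝ (Fin 3))))
    (hC : C ∉ affineSpan ℝ ({D, E} : Set (EuclideanSpace ℝ (Fin 3))))
    (hseg : ∃ t ∈ Set.Ioo (0 : ℝ) 1, ∃ l₁ l₂ l₃ : ℝ,
      0 < l₁ ∧ 0 < l₂ ∧ 0 < l₃ ∧ l₁ + l₂ + l₃ = 1 ∧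
        (1 - t) • D + t • E = l₁ • A + l₂ • B + l₃ • C) :
    dihedralAngle D E B C + dihedralAngle D E C A + dihedralAngle D E A B = 2 * Real.pi :=
  dihedralAngle_sum_around_edge_general A B C D E hB hseg
end

section
/- Let n, m, k be natural numbers, let B be a symmetric invertible real n×n matrix and a a real n×m matrix, and let A be the real (n+m)×(n+m) matrix (indexed by Fin n ⊕ Fin m) with block form A = [[B, −B·a], [−aᵀ·B, aᵀ·B·a]]. Let 𝒜 ⊆ Fin n and ℬ ⊆ Fin m be subsets with |𝒜| = |ℬ| = k. Let A|_{C'} denote the square submatrix of A whose rows and columns are both indexed by the set C' = {inl i : i ∉ 𝒜} ∪ {inr j : j ∈ ℬ} (using one and the same enumeration of C' for rows and for columns, so that det(A|_{C'}) is well defined), and let a_{𝒜,ℬ} denote the k×k submatrix of a with rows indexed by 𝒜 and columns indexed by ℬ (via arbitrary enumerations). Then det(A|_{C'}) = det(B) · (det(a_{𝒜,ℬ}))². -/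
open Matrix

/-!
Writing `V = [1; -aᵀ]`, the block matrix factors as `A = V B Vᵀ`, so its principal submatrix on
the rows `e` is `W B Wᵀ` with `W = V.submatrix e id` and has determinant `det B · (det W)²`.
Up to reordering rows and columns, `W` is block lower triangular with diagonal blocks the identity
on `𝒜ᶜ` and `-(a_{𝒜,ℬ})ᵀ`: the identity rows indexed by `i ∉ 𝒜` vanish on the columns in `𝒜`.
Reordering only changes the sign of `det W`, which the square forgets.
-/

namespace Matrix

variable {ι κ α R : Type*}

theorem fromBlocks_neg_mul_eq_fromRows_mul_mul_transpose [Fintype ι] [DecidableEq ι] [Ring R]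
    (B : Matrix ι ι R) (a : Matrix ι κ R) :
    fromBlocks B (-(B * a)) (-(aᵀ * B)) (aᵀ * B * a) =
      fromRows 1 (-aᵀ) * B * (fromRows 1 (-aᵀ))ᵀ := by
  rw [transpose_fromRows, transpose_one, transpose_neg, transpose_transpose, fromRows_mul,
    fromRows_mul_fromCols]
  simp [Matrix.mul_assoc]

theorem det_submatrix_mul_mul_transpose [Fintype ι] [DecidableEq ι] [CommRing R]
    (V : Matrix κ ι R) (B : Matrix ι ι R) (e : ι → κ) :
    ((V * B * Vᵀ).submatrix e e).det = B.det * (V.submatrix e id).det ^ 2 := by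
  have hbij : Function.Bijective (id : ι → ι) := Function.bijective_id
  rw [submatrix_mul _ _ _ _ _ hbij, submatrix_mul _ _ _ _ _ hbij, ← transpose_submatrix,
    det_mul, det_mul, submatrix_id_id, det_transpose]
  ring

theorem det_submatrix_equiv_sq [Fintype ι] [DecidableEq ι] [Fintype α] [DecidableEq α]
    [CommRing R] (M : Matrix ι ι R) (E F : α ≃ ι) :
    (M.submatrix E F).det ^ 2 = M.det ^ 2 := by
  have hperm : M.submatrix E F = (M.submatrix E E).submatrix id (F.trans E.symm) := by
    ext i j
    simp
  rw [hperm, det_permute', det_submatrix_equiv_self, mul_pow, ← Int.cast_pow,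
    ← Units.val_pow_eq_pow_val, Int.units_sq, Units.val_one, Int.cast_one, one_mul]

theorem det_fromRows_one_submatrix_sumElim [Fintype ι] [DecidableEq ι] [Fintype α]
    [DecidableEq α] [CommRing R] (N : Matrix κ ι R) (s : Set ι) [DecidablePred (· ∈ s)]
    (c : α → κ) (r : α → ι) (hr : ∀ t, r t ∈ s) :
    ((fromRows (1 : Matrix ι ι R) N).submatrix
        (Sum.elim (Sum.inl ∘ Subtype.val) (Sum.inr ∘ c))
        (Sum.elim (Subtype.val : {x // x ∉ s} → ι) r)).det =
      (N.submatrix c r).det := by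
  have hblocks : (fromRows (1 : Matrix ι ι R) N).submatrix
      (Sum.elim (Sum.inl ∘ Subtype.val) (Sum.inr ∘ c)) (Sum.elim Subtype.val r) =
      fromBlocks (1 : Matrix {x // x ∉ s} {x // x ∉ s} R) 0
        (N.submatrix c Subtype.val) (N.submatrix c r) := by
    ext (x | t) (y | u)
    · simp [one_apply, Subtype.ext_iff]
    · simp [show x.1 ≠ r u from fun h => x.2 (h ▸ hr u)]
    · simp
    · simp
  rw [hblocks, det_fromBlocks_zero₁₂, det_one, one_mul]

end Matrix

theorem Function.Injective.exists_equiv_comp_eq_of_range_eq {ι κ α : Type*} {e : ι → κ}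
    {g : α → κ} (he : Function.Injective e) (hg : Function.Injective g)
    (h : Set.range g = Set.range e) : ∃ E : α ≃ ι, e ∘ E = g :=
  ⟨(Equiv.ofInjective g hg).trans ((Equiv.setCongr h).trans (Equiv.ofInjective e he).symm),
    funext fun z => by simp [Equiv.apply_ofInjective_symm]⟩

theorem det_principal_submatrix_block_general (n m k : ℕ)
    (B : Matrix (Fin n) (Fin n) ℝ)
    (a : Matrix (Fin n) (Fin m) ℝ)
    (𝒜 : Finset (Fin n)) (ℬ : Finset (Fin m))
    (e : Fin n → Fin n ⊕ Fin m) (he : Function.Injective e)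
    (hrange : Set.range e =
      Sum.inl '' (↑(𝒜ᶜ) : Set (Fin n)) ∪ Sum.inr '' (↑ℬ : Set (Fin m)))
    (r : Fin k → Fin n) (hr : Function.Injective r) (hrrange : Set.range r = ↑𝒜)
    (c : Fin k → Fin m) (hc : Function.Injective c) (hcrange : Set.range c = ↑ℬ) :
    ((Matrix.fromBlocks B (-(B * a)) (-(aᵀ * B)) (aᵀ * B * a)).submatrix e e).det =
      B.det * (a.submatrix r c).det ^ 2 := by
  set s : Set (Fin n) := ↑𝒜
  have hrs : ∀ t, r t ∈ s := fun t => hrrange ▸ Set.mem_range_self t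
  obtain ⟨rowE, hrowE⟩ := he.exists_equiv_comp_eq_of_range_eq
    (g := Sum.elim (Sum.inl ∘ (Subtype.val : {x // x ∉ s} → Fin n)) (Sum.inr ∘ c))
    ((Sum.inl_injective.comp Subtype.val_injective).sumElim (Sum.inr_injective.comp hc)
      fun _ _ => Sum.inl_ne_inr)
    (by rw [hrange, Set.Sum.elim_range, Set.range_comp, Set.range_comp,
      Subtype.range_coe_subtype, hcrange, Finset.coe_compl]; rfl)
  obtain ⟨colE, hcolE⟩ := Function.injective_id.exists_equiv_comp_eq_of_range_eq
    (g := Sum.elim (Subtype.val : {x // x ∉ s} → Fin n) r)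
    (Subtype.val_injective.sumElim hr fun x t h => x.2 (h ▸ hrs t))
    (by rw [Set.Sum.elim_range, Subtype.range_coe_subtype, hrrange, Set.range_id]
        exact Set.compl_union_self s)
  have hdetW : ((fromRows 1 (-aᵀ)).submatrix e id).det ^ 2 = (a.submatrix r c).det ^ 2 := by
    rw [← det_submatrix_equiv_sq _ rowE colE, submatrix_submatrix, hrowE, hcolE,
      det_fromRows_one_submatrix_sumElim _ s c r hrs]
    change (-(a.submatrix r c)ᵀ).det ^ 2 = _
    rw [det_neg, det_transpose, mul_pow, ← pow_mul, pow_mul', neg_one_sq, one_pow, one_mul]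
  rw [fromBlocks_neg_mul_eq_fromRows_mul_mul_transpose, det_submatrix_mul_mul_transpose, hdetW]

/-- For a symmetric invertible `n×n` matrix `B` and an `n×m` matrix `a`, form the
`(n+m)×(n+m)` block matrix `A = [[B, -B·a], [-aᵀ·B, aᵀ·B·a]]`.  For subsets `𝒜 ⊆ Fin n`,
`ℬ ⊆ Fin m` of equal cardinality `k`, the principal submatrix of `A` indexed by
`C' = {inl i : i ∉ 𝒜} ∪ {inr j : j ∈ ℬ}` (via any enumeration `e`, used for both rows and
columns) has determinant `det B · (det a_{𝒜,ℬ})²`, where `a_{𝒜,ℬ}` is the `k×k` submatrix of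
`a` with rows in `𝒜` and columns in `ℬ` (via any enumerations `r`, `c`). -/
theorem det_principal_submatrix_block (n m k : ℕ)
    (B : Matrix (Fin n) (Fin n) ℝ) (hBsymm : B = Bᵀ) (hBinv : IsUnit B.det)
    (a : Matrix (Fin n) (Fin m) ℝ)
    (𝒜 : Finset (Fin n)) (ℬ : Finset (Fin m)) (h𝒜 : 𝒜.card = k) (hℬ : ℬ.card = k)
    (e : Fin n → Fin n ⊕ Fin m) (he : Function.Injective e)
    (hrange : Set.range e =
      Sum.inl '' (↑(𝒜ᶜ) : Set (Fin n)) ∪ Sum.inr '' (↑ℬ : Set (Fin m)))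
    (r : Fin k → Fin n) (hr : Function.Injective r) (hrrange : Set.range r = ↑𝒜)
    (c : Fin k → Fin m) (hc : Function.Injective c) (hcrange : Set.range c = ↑ℬ) :
    ((Matrix.fromBlocks B (-(B * a)) (-(aᵀ * B)) (aᵀ * B * a)).submatrix e e).det =
      B.det * (a.submatrix r c).det ^ 2 :=
  det_principal_submatrix_block_general n m k B a 𝒜 ℬ e he hrange r hr hrrange c hc hcrange
end

section
/- Let M be a symmetric real (n+m)×(n+m) matrix written in block form M = [[B, C], [Cᵀ, D]] with B an n×n block. If B is invertible and rank M = n (i.e. the rank of M equals the rank of B), then D = Cᵀ·B⁻¹·C. -/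
/-!
The Schur-complement factorization `M = L * fromBlocks B 0 0 S * U` with `S = D - Cᵀ B⁻¹ C` and
`L`, `U` unipotent block-triangular shows `rank M = n + rank S`. So `rank M = n` forces `S = 0`.
-/

open Matrix

theorem Submodule.finrank_prod {K V W : Type*} [Field K] [AddCommGroup V] [Module K V]
    [AddCommGroup W] [Module K W] (p : Submodule K V) (q : Submodule K W)
    [FiniteDimensional K p] [FiniteDimensional K q] :
    Module.finrank K (p.prod q) = Module.finrank K p + Module.finrank K q := by
  rw [← Module.finrank_prod, ← LinearMap.finrank_range_of_inj
    (f := p.subtype.prodMap q.subtype) (Subtype.val_injective.prodMap Subtype.val_injective),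
    LinearMap.range_prodMap, Submodule.range_subtype, Submodule.range_subtype]

namespace Matrix

variable {K : Type*} [Field K] {l m n o : Type*} [Fintype m] [Fintype o]

theorem rank_eq_zero_iff (A : Matrix l m K) : A.rank = 0 ↔ A = 0 := by
  classical
  refine ⟨fun h => ?_, fun h => h ▸ rank_zero⟩
  rw [rank, Submodule.finrank_eq_zero, LinearMap.range_eq_bot, ← toLin'_apply'] at h
  exact toLin'.injective (h.trans (map_zero _).symm)

theorem rank_fromBlocks_zero₁₂_zero₂₁ [Fintype l] [Fintype n] (A : Matrix l m K)
    (D : Matrix n o K) : (fromBlocks A 0 0 D).rank = A.rank + D.rank := by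
  have hmul : (fromBlocks A 0 0 D).mulVecLin =
      (LinearEquiv.sumArrowLequivProdArrow l n K K).symm.toLinearMap ∘ₗ
        (A.mulVecLin.prodMap D.mulVecLin) ∘ₗ
          (LinearEquiv.sumArrowLequivProdArrow m o K K).toLinearMap := by
    ext v (i | i) <;>
      simp only [mulVecBilin_apply, fromBlocks_mulVec, zero_mulVec, add_zero, zero_add,
        Sum.elim_inl, Sum.elim_inr, LinearMap.coe_comp, LinearEquiv.coe_coe, Function.comp_apply,
        LinearMap.prodMap_apply, LinearEquiv.sumArrowLequivProdArrow_symm_apply_inl,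
        LinearEquiv.sumArrowLequivProdArrow_symm_apply_inr] <;>
      rfl
  rw [rank, hmul, LinearMap.range_comp,
    LinearMap.range_comp_of_range_eq_top _ (LinearEquiv.range _), LinearEquiv.finrank_map_eq,
    LinearMap.range_prodMap, Submodule.finrank_prod]
  rfl

theorem rank_fromBlocks_of_isUnit_det₁₁ [DecidableEq m] [DecidableEq n] [Fintype n]
    (A : Matrix m m K) (B : Matrix m n K) (C : Matrix n m K) (D : Matrix n n K)
    (hA : IsUnit A.det) :
    (fromBlocks A B C D).rank = Fintype.card m + (D - C * A⁻¹ * B).rank := by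
  let := A.invertibleOfIsUnitDet hA
  rw [fromBlocks_eq_of_invertible₁₁, invOf_eq_nonsing_inv,
    rank_mul_eq_left_of_isUnit_det _ _ (by simp),
    rank_mul_eq_right_of_isUnit_det _ _ (by simp),
    rank_fromBlocks_zero₁₂_zero₂₁, rank_of_isUnit A ((isUnit_iff_isUnit_det A).mpr hA)]

end Matrix

theorem lower_block_eq_of_rank_general (n m : ℕ)
    (B : Matrix (Fin n) (Fin n) ℝ) (C : Matrix (Fin n) (Fin m) ℝ)
    (D : Matrix (Fin m) (Fin m) ℝ)
    (hBinv : IsUnit B.det) (hrank : (Matrix.fromBlocks B C Cᵀ D).rank = n) :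
    D = Cᵀ * B⁻¹ * C := by
  rw [rank_fromBlocks_of_isUnit_det₁₁ B C Cᵀ D hBinv, Fintype.card_fin, add_eq_left,
    Matrix.rank_eq_zero_iff, sub_eq_zero] at hrank
  exact hrank

/-- If a symmetric block matrix `M = [[B, C], [Cᵀ, D]]` has invertible upper-left block `B` and
`rank M = n` (the size of `B`), then `D = Cᵀ · B⁻¹ · C`. -/
theorem lower_block_eq_of_rank (n m : ℕ)
    (B : Matrix (Fin n) (Fin n) ℝ) (C : Matrix (Fin n) (Fin m) ℝ)
    (D : Matrix (Fin m) (Fin m) ℝ) (hB : B = Bᵀ) (hD : D = Dᵀ)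
    (hBinv : IsUnit B.det) (hrank : (Matrix.fromBlocks B C Cᵀ D).rank = n) :
    D = Cᵀ * B⁻¹ * C :=
  lower_block_eq_of_rank_general n m B C D hBinv hrank
end

section
/- Define H : ℝ⁶ → ℝ⁶ by sending (x_b, x_c, y_c, x_d, y_d, z_d) to the six pairwise distances (|AB|, |AC|, |BC|, |AD|, |BD|, |CD|) among the points A = (0,0,0), B = (x_b, 0, 0), C = (x_c, y_c, 0), D = (x_d, y_d, z_d) in ℝ³. At every point where x_b > 0, y_c > 0, z_d ≠ 0 and all six distances are nonzero, H is differentiable and (the product of the six distances) · |det(DH)| = x_b² · y_c · 6V, where DH is the derivative of H at that point viewed as a 6×6 matrix and V = x_b · y_c · |z_d| / 6 is the volume of the tetrahedron ABCD. -/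
/-- The six pairwise distances `(|AB|, |AC|, |BC|, |AD|, |BD|, |CD|)` among the points
`A = (0,0,0)`, `B = (x_b,0,0)`, `C = (x_c,y_c,0)`, `D = (x_d,y_d,z_d)` in `ℝ³`, as a map of
`(x_b, x_c, y_c, x_d, y_d, z_d)`. -/
noncomputable def tetLengths : (Fin 6 → ℝ) → (Fin 6 → ℝ) := fun v =>
  ![Real.sqrt ((v 0) ^ 2),
    Real.sqrt ((v 1) ^ 2 + (v 2) ^ 2),
    Real.sqrt ((v 1 - v 0) ^ 2 + (v 2) ^ 2),
    Real.sqrt ((v 3) ^ 2 + (v 4) ^ 2 + (v 5) ^ 2),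
    Real.sqrt ((v 3 - v 0) ^ 2 + (v 4) ^ 2 + (v 5) ^ 2),
    Real.sqrt ((v 3 - v 1) ^ 2 + (v 4 - v 2) ^ 2 + (v 5) ^ 2)]

/-!
The six distances are the square roots of six quadratic polynomials `q`, so by the chain rule
`DH = diag (1 / (2 |PQ|)) · Dq` and `(∏ |PQ|) · |det DH| = |det Dq| / 2⁶`.  The Jacobian of the
squared distances is block lower triangular, because `|AB|², |AC|², |BC|²` do not involve `D`;
its diagonal blocks have determinants `2³ x_b² y_c` and `2³ x_b y_c z_d`.
-/

open Matrix ContinuousLinearMap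

section SqrtJacobian

variable {ι : Type*}

theorem hasFDerivAt_sqrt_pi {E : Type*} [NormedAddCommGroup E] [NormedSpace ℝ E]
    {q : E → ι → ℝ} {q' : E →L[ℝ] ι → ℝ} {p : E} (hq : HasFDerivAt q q' p)
    (hq0 : ∀ i, q p i ≠ 0) :
    HasFDerivAt (fun v i => √(q v i)) (pi fun i => (1 / (2 * √(q p i))) • (proj i ∘L q')) p :=
  hasFDerivAt_pi.2 fun i => (hasFDerivAt_pi'.1 hq i).sqrt (hq0 i)

variable [Fintype ι] [DecidableEq ι]

theorem toMatrix'_pi_smul_proj_comp {κ : Type*} [Fintype κ] [DecidableEq κ] (c : ι → ℝ)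
    (A : (κ → ℝ) →L[ℝ] ι → ℝ) :
    LinearMap.toMatrix' (pi fun i => c i • (proj i ∘L A) : (κ → ℝ) →L[ℝ] ι → ℝ).toLinearMap =
      diagonal c * LinearMap.toMatrix' A.toLinearMap := by
  ext i j
  simp [LinearMap.toMatrix'_apply, diagonal_mul]

theorem prod_sqrt_mul_abs_det_toMatrix'_fderiv_sqrt {q : (ι → ℝ) → ι → ℝ} {J : Matrix ι ι ℝ}
    {p : ι → ℝ} (hq : HasFDerivAt q (LinearMap.toContinuousLinearMap (toLin' J)) p)
    (hpos : ∀ i, 0 < q p i) :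
    (∏ i, √(q p i)) *
        |(LinearMap.toMatrix' (fderiv ℝ (fun v i => √(q v i)) p).toLinearMap).det| =
      |J.det| / 2 ^ Fintype.card ι := by
  have hsqrt (i : ι) : 0 < √(q p i) := Real.sqrt_pos.2 (hpos i)
  have hscale : (∏ i, √(q p i)) * |∏ i, 1 / (2 * √(q p i))| = 1 / 2 ^ Fintype.card ι := by
    rw [abs_of_pos (Finset.prod_pos fun i _ => one_div_pos.2 (mul_pos two_pos (hsqrt i))),
      ← Finset.prod_mul_distrib, Finset.prod_congr rfl fun i _ =>
        (show √(q p i) * (1 / (2 * √(q p i))) = 1 / 2 by field_simp [(hsqrt i).ne']),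
      Finset.prod_const, Finset.card_univ, div_pow, one_pow]
  rw [(hasFDerivAt_sqrt_pi hq fun i => (hpos i).ne').fderiv, toMatrix'_pi_smul_proj_comp,
    det_mul, det_diagonal, abs_mul, ← mul_assoc, hscale, LinearMap.coe_toContinuousLinearMap,
    LinearMap.toMatrix'_toLin', one_div_mul_eq_div]

end SqrtJacobian

def tetSqLengths (v : Fin 6 → ℝ) : Fin 6 → ℝ :=
  ![v 0 ^ 2,
    v 1 ^ 2 + v 2 ^ 2,
    (v 1 - v 0) ^ 2 + v 2 ^ 2,
    v 3 ^ 2 + v 4 ^ 2 + v 5 ^ 2,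
    (v 3 - v 0) ^ 2 + v 4 ^ 2 + v 5 ^ 2,
    (v 3 - v 1) ^ 2 + (v 4 - v 2) ^ 2 + v 5 ^ 2]

theorem tetLengths_eq_sqrt_tetSqLengths : tetLengths = fun v i => √(tetSqLengths v i) := by
  funext v i
  fin_cases i <;> rfl

def tetSqLengthsJacobian (p : Fin 6 → ℝ) : Matrix (Fin 6) (Fin 6) ℝ := (2 : ℝ) •
  !![p 0, 0, 0, 0, 0, 0;
     0, p 1, p 2, 0, 0, 0;
     p 0 - p 1, p 1 - p 0, p 2, 0, 0, 0;
     0, 0, 0, p 3, p 4, p 5;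
     p 0 - p 3, 0, 0, p 3 - p 0, p 4, p 5;
     0, p 1 - p 3, p 2 - p 4, p 3 - p 1, p 4 - p 2, p 5]

theorem hasFDerivAt_tetSqLengths (p : Fin 6 → ℝ) :
    HasFDerivAt tetSqLengths (LinearMap.toContinuousLinearMap (toLin' (tetSqLengthsJacobian p)))
      p := by
  have hv (k : Fin 6) : HasFDerivAt (fun v : Fin 6 → ℝ => v k) (proj (R := ℝ) k) p :=
    hasFDerivAt_apply k p
  refine hasFDerivAt_pi'.2 fun i => ?_
  fin_cases i <;>
  [refine ((hv 0).pow 2).congr_fderiv ?_;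
   refine (((hv 1).pow 2).add ((hv 2).pow 2)).congr_fderiv ?_;
   refine ((((hv 1).sub (hv 0)).pow 2).add ((hv 2).pow 2)).congr_fderiv ?_;
   refine ((((hv 3).pow 2).add ((hv 4).pow 2)).add ((hv 5).pow 2)).congr_fderiv ?_;
   refine (((((hv 3).sub (hv 0)).pow 2).add ((hv 4).pow 2)).add
     ((hv 5).pow 2)).congr_fderiv ?_;
   refine (((((hv 3).sub (hv 1)).pow 2).add (((hv 4).sub (hv 2)).pow 2)).add
     ((hv 5).pow 2)).congr_fderiv ?_] <;>
  · ext v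
    simp only [tetSqLengthsJacobian, Fin.zero_eta, Fin.mk_one, Fin.reduceFinMk,
      ContinuousLinearMap.comp_apply, _root_.add_apply, _root_.sub_apply, _root_.smul_apply,
      proj_apply, LinearMap.coe_toContinuousLinearMap', toLin'_apply, smul_mulVec,
      cons_mulVec, empty_mulVec, dotProduct, Fin.sum_univ_succ, Fin.sum_univ_zero,
      Pi.smul_apply, Pi.sub_apply, cons_val_zero, cons_val_succ, cons_val, smul_eq_mul,
      nsmul_eq_mul, Fin.succ_zero_eq_one, Fin.succ_one_eq_two, Fin.reduceSucc]
    ring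

theorem det_tetSqLengthsJacobian (p : Fin 6 → ℝ) :
    (tetSqLengthsJacobian p).det = 2 ^ 6 * (p 0 ^ 3 * p 2 ^ 2 * p 5) := by
  have hblocks : tetSqLengthsJacobian p =
      (2 : ℝ) • reindex finSumFinEquiv finSumFinEquiv (fromBlocks
      !![p 0, 0, 0; 0, p 1, p 2; p 0 - p 1, p 1 - p 0, p 2] 0
      !![0, 0, 0; p 0 - p 3, 0, 0; 0, p 1 - p 3, p 2 - p 4]
      !![p 3, p 4, p 5; p 3 - p 0, p 4, p 5; p 3 - p 1, p 4 - p 2, p 5]) := by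
    ext i j
    fin_cases i <;> fin_cases j <;> rfl
  rw [hblocks, det_smul, det_reindex_self, det_fromBlocks_zero₁₂, det_fin_three, det_fin_three]
  simp only [Fintype.card_fin, of_apply, cons_val', cons_val_zero, cons_val_one, cons_val,
    cons_val_fin_one]
  ring

theorem tetLengths_jacobian_general (p : Fin 6 → ℝ) (hxb : 0 < p 0)
    (hdist : ∀ i, tetLengths p i ≠ 0) :
    DifferentiableAt ℝ tetLengths p ∧
      (∏ i, tetLengths p i) *
          |(Matrix.of fun i j : Fin 6 =>
            fderiv ℝ tetLengths p (Pi.single j 1) i).det| =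
        (p 0) ^ 2 * p 2 * (6 * (p 0 * p 2 * |p 5| / 6)) := by
  rw [tetLengths_eq_sqrt_tetSqLengths] at hdist ⊢
  have hpos (i : Fin 6) : 0 < tetSqLengths p i := Real.sqrt_ne_zero'.1 (hdist i)
  have hq := hasFDerivAt_tetSqLengths p
  refine ⟨(hasFDerivAt_sqrt_pi hq fun i => (hpos i).ne').differentiableAt, ?_⟩
  calc _ = |(tetSqLengthsJacobian p).det| / 2 ^ 6 :=
        prod_sqrt_mul_abs_det_toMatrix'_fderiv_sqrt hq hpos
    _ = p 0 ^ 2 * p 2 * (6 * (p 0 * p 2 * |p 5| / 6)) := by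
        rw [det_tetSqLengthsJacobian, abs_mul, abs_mul,
          abs_of_nonneg (by positivity : (0 : ℝ) ≤ p 0 ^ 3 * p 2 ^ 2)]
        ring

/-- At every point with `x_b > 0`, `y_c > 0`, `z_d ≠ 0` and all six distances nonzero, the map
`H = tetLengths` is differentiable, and
`(∏ of the six distances) · |det DH| = x_b² · y_c · 6V`, where `V = x_b · y_c · |z_d| / 6` is
the volume of the tetrahedron `ABCD`. -/
theorem tetLengths_jacobian (p : Fin 6 → ℝ) (hxb : 0 < p 0) (hyc : 0 < p 2) (hzd : p 5 ≠ 0)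
    (hdist : ∀ i, tetLengths p i ≠ 0) :
    DifferentiableAt ℝ tetLengths p ∧
      (∏ i, tetLengths p i) *
          |(Matrix.of fun i j : Fin 6 =>
            fderiv ℝ tetLengths p (Pi.single j 1) i).det| =
        (p 0) ^ 2 * p 2 * (6 * (p 0 * p 2 * |p 5| / 6)) :=
  tetLengths_jacobian_general p hxb hdist
end
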